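/- If Â⁽ⁿ⁾ is nondecreasing in s for each n and ω, A is continuous and nondecreasing on [0,t], and Â⁽ⁿ⁾(s) → A(s) in probability for each s in a dense subset of [0,t] including the endpoints, then sup_{s ∈ [0,t]} |Â⁽ⁿ⁾(s) − A(s)| → 0 in probability (a stochastic Pólya/Dini-type theorem). -/

import Mathlib

/-!
By uniform continuity of `A` and density of `D`, finitely many points of `D` (including the
endpoints) bracket every `s ∈ [0,t]` between neighbours `u ≤ s ≤ v` with `A v - A u < ε/2`.
Monotonicity of the paths and of `A` then bounds the error at `s` by the larger of the errors
at `u` and `v` plus `ε/2`, so the supremum exceeds `ε` only on a finite union of events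
`{ε/2 < |Â⁽ⁿ⁾(r) - A(r)|}`, each of whose probabilities tends to `0`.
-/

open MeasureTheory Filter Set Topology

lemma exists_mem_finset_bracket {F : Finset ℝ} {a b δ s : ℝ} (ha : a ∈ F) (hb : b ∈ F)
    (hF : ∀ x ∈ Icc a b, ∃ d ∈ F, dist x d < δ) (hs : s ∈ Icc a b) :
    ∃ u ∈ F, ∃ v ∈ F, u ∈ Icc a s ∧ v ∈ Icc s b ∧ v - u < 2 * δ := by
  obtain ⟨u, hu, hu_max⟩ := (F.filter (· ≤ s)).exists_max_image id
    ⟨a, Finset.mem_filter.2 ⟨ha, hs.1⟩⟩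
  obtain ⟨v, hv, hv_min⟩ := (F.filter (s ≤ ·)).exists_min_image id
    ⟨b, Finset.mem_filter.2 ⟨hb, hs.2⟩⟩
  rw [Finset.mem_filter] at hu hv
  have hau : a ≤ u := hu_max a (Finset.mem_filter.2 ⟨ha, hs.1⟩)
  have hvb : v ≤ b := hv_min b (Finset.mem_filter.2 ⟨hb, hs.2⟩)
  refine ⟨u, hu.1, v, hv.1, ⟨hau, hu.2⟩, ⟨hv.2, hvb⟩, ?_⟩
  -- No point of `F` lies strictly between `u` and `v`, so the midpoint is far from `F`.
  obtain ⟨d, hd, hmid⟩ :=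
    hF ((u + v) / 2) ⟨by linarith [hu.2, hv.2], by linarith [hu.2, hv.2]⟩
  rw [Real.dist_eq] at hmid
  rcases le_total d s with hds | hsd
  · have : d ≤ u := hu_max d (Finset.mem_filter.2 ⟨hd, hds⟩)
    linarith [le_abs_self ((u + v) / 2 - d)]
  · have : v ≤ d := hv_min d (Finset.mem_filter.2 ⟨hd, hsd⟩)
    linarith [neg_abs_le ((u + v) / 2 - d)]

lemma exists_finset_bracketing {A : ℝ → ℝ} {a b ε : ℝ} {D : Set ℝ}
    (hA : ContinuousOn A (Icc a b)) (hdense : Icc a b ⊆ closure D) (ha : a ∈ D) (hb : b ∈ D)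
    (hε : 0 < ε) :
    ∃ F : Finset ℝ, ↑F ⊆ D ∧
      ∀ s ∈ Icc a b, ∃ u ∈ F, ∃ v ∈ F, u ∈ Icc a s ∧ v ∈ Icc s b ∧ A v - A u < ε := by
  obtain ⟨δ, hδ, hunif⟩ := Metric.uniformContinuousOn_iff.1
    (isCompact_Icc.uniformContinuousOn_of_continuous hA) ε hε
  have hcover : Icc a b ⊆ ⋃ d ∈ D, Metric.ball d (δ / 2) := fun x hx => by
    obtain ⟨d, hd, hxd⟩ := Metric.mem_closure_iff.1 (hdense hx) (δ / 2) (by positivity)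
    exact mem_biUnion hd (by rwa [Metric.mem_ball])
  obtain ⟨D', hD'D, hD'fin, hD'cover⟩ :=
    isCompact_Icc.elim_finite_subcover_image (fun _ _ => Metric.isOpen_ball) hcover
  refine ⟨insert a (insert b hD'fin.toFinset), ?_, fun s hs => ?_⟩
  · simpa [insert_subset_iff, ha, hb] using hD'D
  have hnet : ∀ x ∈ Icc a b, ∃ d ∈ insert a (insert b hD'fin.toFinset), dist x d < δ / 2 :=
    fun x hx => by
      obtain ⟨d, hd, hxd⟩ := mem_iUnion₂.1 (hD'cover hx)
      exact ⟨d, by simp [hd], hxd⟩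
  obtain ⟨u, hu, v, hv, hsu, hsv, huv⟩ :=
    exists_mem_finset_bracket (by simp) (by simp) hnet hs
  have hu' : u ∈ Icc a b := ⟨hsu.1, hsu.2.trans hs.2⟩
  have hv' : v ∈ Icc a b := ⟨hs.1.trans hsv.1, hsv.2⟩
  have hAuv : dist (A v) (A u) < ε := hunif v hv' u hu' <| by
    rw [Real.dist_eq, abs_of_nonneg (by linarith [hsu.2, hsv.1])]
    linarith
  rw [Real.dist_eq] at hAuv
  exact ⟨u, hu, v, hv, hsu, hsv, (le_abs_self _).trans_lt hAuv⟩

lemma MonotoneOn.abs_sub_le_max_add {f g : ℝ → ℝ} {S : Set ℝ} (hf : MonotoneOn f S)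
    (hg : MonotoneOn g S) {u s v : ℝ} (hu : u ∈ S) (hs : s ∈ S) (hv : v ∈ S)
    (hus : u ≤ s) (hsv : s ≤ v) :
    |f s - g s| ≤ max |f u - g u| |f v - g v| + (g v - g u) := by
  have hfu := hf hu hs hus
  have hfv := hf hs hv hsv
  have hgu := hg hu hs hus
  have hgv := hg hs hv hsv
  rw [abs_le]
  constructor
  · linarith [neg_abs_le (f u - g u), le_max_left |f u - g u| |f v - g v|]
  · linarith [le_abs_self (f v - g v), le_max_right |f u - g u| |f v - g v|]

lemma tendsto_measure_biUnion_finset_zero {Ω ι α : Type*} [MeasurableSpace Ω] (μ : Measure Ω)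
    {l : Filter α} (F : Finset ι) {E : α → ι → Set Ω}
    (h : ∀ i ∈ F, Tendsto (fun n => μ (E n i)) l (𝓝 0)) :
    Tendsto (fun n => μ (⋃ i ∈ F, E n i)) l (𝓝 0) := by
  have hsum : Tendsto (fun n => ∑ i ∈ F, μ (E n i)) l (𝓝 0) := by
    simpa using tendsto_finsetSum F h
  exact tendsto_of_tendsto_of_tendsto_of_le_of_le tendsto_const_nhds hsum
    (fun _ => zero_le) (fun n => measure_biUnion_finset_le F _)

theorem stochastic_polya_dini_general
    {Ω : Type*} [MeasurableSpace Ω] (P : Measure Ω)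
    (t : ℝ) (A : ℝ → ℝ)
    (hAmono : MonotoneOn A (Set.Icc 0 t)) (hAcont : ContinuousOn A (Set.Icc 0 t))
    (Ahat : ℕ → ℝ → Ω → ℝ)
    (hmono : ∀ n ω, MonotoneOn (fun s => Ahat n s ω) (Set.Icc 0 t))
    (D : Set ℝ) (hdense : Set.Icc (0 : ℝ) t ⊆ closure D)
    (h0 : (0 : ℝ) ∈ D) (hte : t ∈ D)
    (hpt : ∀ s ∈ D, ∀ ε > 0,
      Tendsto (fun n => P {ω | ε < |Ahat n s ω - A s|}) atTop (nhds 0)) :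
    ∀ ε > 0, Tendsto
      (fun n => P {ω | ∃ s ∈ Set.Icc (0 : ℝ) t, ε < |Ahat n s ω - A s|})
      atTop (nhds 0) := by
  intro ε hε
  obtain ⟨F, hFD, hF⟩ := exists_finset_bracketing hAcont hdense h0 hte (half_pos hε)
  have hsub : ∀ n, {ω | ∃ s ∈ Icc (0 : ℝ) t, ε < |Ahat n s ω - A s|} ⊆
      ⋃ r ∈ F, {ω | ε / 2 < |Ahat n r ω - A r|} := by
    rintro n ω ⟨s, hs, hεs⟩
    obtain ⟨u, hu, v, hv, hsu, hsv, huv⟩ := hF s hs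
    have hbound := (hmono n ω).abs_sub_le_max_add hAmono ⟨hsu.1, hsu.2.trans hs.2⟩ hs
      ⟨hs.1.trans hsv.1, hsv.2⟩ hsu.2 hsv.1
    have hmax : ε / 2 < max |Ahat n u ω - A u| |Ahat n v ω - A v| := by linarith
    rcases lt_max_iff.1 hmax with hεu | hεv
    · exact mem_biUnion hu hεu
    · exact mem_biUnion hv hεv
  exact tendsto_of_tendsto_of_tendsto_of_le_of_le tendsto_const_nhds
    (tendsto_measure_biUnion_finset_zero P F fun r hr => hpt r (hFD hr) _ (half_pos hε))
    (fun _ => zero_le) (fun n => measure_mono (hsub n))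

/-- Stochastic Pólya/Dini theorem: if each path of `Â⁽ⁿ⁾` is nondecreasing, `A` is
continuous and nondecreasing on `[0,t]`, and `Â⁽ⁿ⁾(s) → A(s)` in probability for every
`s` in a dense subset of `[0,t]` containing the endpoints, then
`sup_{s ∈ [0,t]} |Â⁽ⁿ⁾(s) − A(s)| → 0` in probability. -/
theorem stochastic_polya_dini
    {Ω : Type*} [MeasurableSpace Ω] (P : Measure Ω) [IsProbabilityMeasure P]
    (t : ℝ) (ht : 0 < t) (A : ℝ → ℝ)
    (hAmono : MonotoneOn A (Set.Icc 0 t)) (hAcont : ContinuousOn A (Set.Icc 0 t))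
    (Ahat : ℕ → ℝ → Ω → ℝ)
    (hmono : ∀ n ω, MonotoneOn (fun s => Ahat n s ω) (Set.Icc 0 t))
    (D : Set ℝ) (hD : D ⊆ Set.Icc 0 t) (hdense : Set.Icc (0 : ℝ) t ⊆ closure D)
    (h0 : (0 : ℝ) ∈ D) (hte : t ∈ D)
    (hpt : ∀ s ∈ D, ∀ ε > 0,
      Tendsto (fun n => P {ω | ε < |Ahat n s ω - A s|}) atTop (nhds 0)) :
    ∀ ε > 0, Tendsto
      (fun n => P {ω | ∃ s ∈ Set.Icc (0 : ℝ) t, ε < |Ahat n s ω - A s|})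
      atTop (nhds 0) :=
  stochastic_polya_dini_general P t A hAmono hAcont Ahat hmono D hdense h0 hte hpt
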